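/- arXiv:quant-ph/0606103 — 2 statements merged into one kernel-verified Lean document; each statement's English description precedes it below -/
import Mathlib

section
/- Let H be a Hermitian operator with orthonormal eigenbasis |e_j⟩ and eigenvalues E_j (j = 0,…,D−1), let T > 0, let Z = Σ_j exp(−E_j/(k_B T)), and let ρ_T = exp(−H/(k_B T))/Z be the thermal state. If exp(−E_0/(k_B T))/Z > 1/(1 + R(|e_0⟩)), where R(|e_0⟩) is the global robustness of entanglement of the ground state projector |e_0⟩⟨e_0|, then ρ_T is entangled. -/
open Matrix
open scoped ComplexOrder BigOperators

/-- A density matrix: positive semidefinite with unit trace. -/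
def IsDensity {n : Type*} [Fintype n] [DecidableEq n] (M : Matrix n n ℂ) : Prop :=
  M.PosSemidef ∧ M.trace = 1

/-- The global robustness of entanglement of `σ` relative to the set `S` of
separable states. -/
noncomputable def robustness {n : Type*} [Fintype n] [DecidableEq n]
    (S : Set (Matrix n n ℂ)) (σ : Matrix n n ℂ) : ℝ :=
  sInf {t : ℝ | 0 ≤ t ∧ ∃ τ : Matrix n n ℂ, IsDensity τ ∧
    (1 / (1 + t)) • (σ + t • τ) ∈ S}

/-- The rank-one projector `|ψ⟩⟨ψ|`. -/
def proj {n : Type*} (ψ : n → ℂ) : Matrix n n ℂ :=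
  Matrix.vecMulVec ψ (star ψ)

/- Auxiliary lemmas -/

lemma real_smul_matrix_eq {n : Type*} (r : ℝ) (M : Matrix n n ℂ) :
    r • M = (r : ℂ) • M := by
  ext i j; simp [Complex.real_smul]

lemma proj_posSemidef {n : Type*} [Fintype n] (ψ : n → ℂ) : (proj ψ).PosSemidef := by
  rw [proj, vecMulVec_eq Unit, ← conjTranspose_replicateCol]
  exact posSemidef_self_mul_conjTranspose _

lemma proj_trace {n : Type*} [Fintype n] (ψ : n → ℂ) :
    (proj ψ).trace = star ψ ⬝ᵥ ψ := by
  rw [proj, vecMulVec_eq Unit, trace_replicateCol_mul_replicateRow, dotProduct_comm]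

lemma posSemidef_add {n : Type*} [Fintype n] {A B : Matrix n n ℂ}
    (hA : A.PosSemidef) (hB : B.PosSemidef) : (A + B).PosSemidef := by
  refine ⟨hA.1.add hB.1, fun x => ?_⟩
  simpa [mul_add, add_mul] using add_nonneg (hA.2 x) (hB.2 x)

lemma posSemidef_real_smul {n : Type*} [Fintype n] {A : Matrix n n ℂ}
    (hA : A.PosSemidef) {r : ℝ} (hr : 0 ≤ r) : (r • A).PosSemidef := by
  rw [real_smul_matrix_eq]
  have hc : (0 : ℂ) ≤ (r : ℂ) := by exact_mod_cast Complex.zero_le_real.mpr hr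
  refine ⟨?_, fun x => ?_⟩
  · unfold Matrix.IsHermitian
    rw [conjTranspose_smul, hA.1]
    congr 1
    simp [Complex.ext_iff]
  · exact (hA.smul hc).2 x

lemma posSemidef_sum {n : Type*} [Fintype n] {ι : Type*} (s : Finset ι)
    (f : ι → Matrix n n ℂ) (hf : ∀ i ∈ s, (f i).PosSemidef) :
    (∑ i ∈ s, f i).PosSemidef := by
  classical
  induction s using Finset.induction_on with
  | empty => simpa using Matrix.PosSemidef.zero
  | insert a s hnot ih =>
    rw [Finset.sum_insert hnot]
    exact posSemidef_add (hf _ (Finset.mem_insert_self _ _))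
      (ih fun i hi => hf i (Finset.mem_insert_of_mem hi))

/-- Lemma 1 (thermal-state entanglement criterion): if the ground-state population
exceeds `1/(1 + R(|e₀⟩))` then the thermal state is entangled. -/
theorem stmt_1 {n : Type*} [Fintype n] [DecidableEq n] {D : ℕ} [NeZero D]
    (S : Set (Matrix n n ℂ)) (hS : Convex ℝ S)
    (hmm : ((Fintype.card n : ℝ)⁻¹) • (1 : Matrix n n ℂ) ∈ S)
    (e : Fin D → (n → ℂ))
    (horth : ∀ i j, star (e i) ⬝ᵥ e j = if i = j then 1 else 0)
    (E : Fin D → ℝ) (kB T : ℝ) (hkB : 0 < kB) (hT : 0 < T)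
    (Z : ℝ) (hZ : Z = ∑ j, Real.exp (-(E j) / (kB * T)))
    (ρT : Matrix n n ℂ)
    (hρT : ρT = Z⁻¹ • ∑ j, Real.exp (-(E j) / (kB * T)) • proj (e j))
    (hattain : ∃ τ : Matrix n n ℂ, IsDensity τ ∧
      (1 / (1 + robustness S (proj (e 0)))) •
        (proj (e 0) + robustness S (proj (e 0)) • τ) ∈ S)
    (hcond : Real.exp (-(E 0) / (kB * T)) / Z > 1 / (1 + robustness S (proj (e 0)))) :
    ρT ∉ S := by
  intro hρS
  set c : Fin D → ℝ := fun j => Real.exp (-(E j) / (kB * T)) with hc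
  have hcpos : ∀ j, 0 < c j := fun j => Real.exp_pos _
  set R : ℝ := robustness S (proj (e 0)) with hRdef
  -- basic positivity
  have hsum : c 0 + ∑ j ∈ Finset.univ.erase 0, c j = Z := by
    rw [hZ]; exact Finset.add_sum_erase _ c (Finset.mem_univ 0)
  have herasenonneg : (0:ℝ) ≤ ∑ j ∈ Finset.univ.erase 0, c j :=
    Finset.sum_nonneg fun j _ => (hcpos j).le
  have hc0Z : c 0 ≤ Z := by linarith
  have hZpos : 0 < Z := lt_of_lt_of_le (hcpos 0) hc0Z
  set t : ℝ := (Z - c 0) / c 0 with htdef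
  have ht0 : 0 ≤ t := div_nonneg (by linarith) (hcpos 0).le
  have h1t : 1 + t = Z / c 0 := by
    rw [htdef, eq_div_iff (hcpos 0).ne', add_mul, div_mul_cancel₀ _ (hcpos 0).ne']; ring
  -- trace of proj (e j) is 1
  have htr : ∀ j, (proj (e j)).trace = 1 := by
    intro j; rw [proj_trace, horth j j]; simp
  -- membership of t in the robustness set
  have hmem : t ∈ {t : ℝ | 0 ≤ t ∧ ∃ τ : Matrix n n ℂ, IsDensity τ ∧
      (1 / (1 + t)) • (proj (e 0) + t • τ) ∈ S} := by
    refine ⟨ht0, ?_⟩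
    by_cases hD : ∑ j ∈ Finset.univ.erase 0, c j = 0
    · -- only the ground state contributes; ρT = proj (e 0)
      have herase : ∀ j ∈ Finset.univ.erase 0, c j = 0 := fun j hj =>
        (Finset.sum_eq_zero_iff_of_nonneg fun j _ => (hcpos j).le).mp hD j hj
      have hZc : Z = c 0 := by linarith
      have ht' : t = 0 := by rw [htdef, hZc]; simp
      have hρ : ρT = proj (e 0) := by
        rw [hρT]
        have : (∑ j, c j • proj (e j)) =
            c 0 • proj (e 0) + ∑ j ∈ Finset.univ.erase 0, c j • proj (e j) :=
          (Finset.add_sum_erase _ _ (Finset.mem_univ 0)).symm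
        rw [show (∑ j, Real.exp (-(E j) / (kB * T)) • proj (e j)) = ∑ j, c j • proj (e j)
          from rfl, this, Finset.sum_eq_zero (fun j hj => by rw [herase j hj, zero_smul]),
          add_zero, smul_smul, hZc, inv_mul_cancel₀ (hcpos 0).ne', one_smul]
      refine ⟨proj (e 0), ⟨proj_posSemidef _, htr 0⟩, ?_⟩
      rw [ht']
      simpa [hρ] using hρS
    · -- genuinely mixed thermal state
      have hlt : c 0 < Z := by
        rcases lt_or_eq_of_le herasenonneg with h | h
        · linarith
        · exact absurd h.symm hD
      set τ : Matrix n n ℂ := (Z - c 0)⁻¹ • ∑ j ∈ Finset.univ.erase 0, c j • proj (e j)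
        with hτdef
      have hτpsd : τ.PosSemidef := by
        apply posSemidef_real_smul _ (inv_nonneg.mpr (by linarith))
        exact posSemidef_sum _ _ fun j _ =>
          posSemidef_real_smul (proj_posSemidef _) (hcpos j).le
      have hτtr : τ.trace = 1 := by
        rw [hτdef, trace_smul, trace_sum]
        have : ∑ j ∈ Finset.univ.erase 0, (c j • proj (e j)).trace
            = ((∑ j ∈ Finset.univ.erase 0, c j : ℝ) : ℂ) := by
          push_cast
          exact Finset.sum_congr rfl fun j _ => by rw [trace_smul, htr j]; simp
        rw [this]
        have hne : (Z - c 0) ≠ 0 := by linarith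
        rw [show (∑ j ∈ Finset.univ.erase 0, c j) = Z - c 0 by linarith,
          Complex.real_smul]
        push_cast
        exact inv_mul_cancel₀ (by exact_mod_cast hne : ((Z : ℂ) - (c 0 : ℂ)) ≠ 0)
      refine ⟨τ, ⟨hτpsd, hτtr⟩, ?_⟩
      have key : (1 / (1 + t)) • (proj (e 0) + t • τ) = ρT := by
        rw [hρT, hτdef, smul_smul]
        have hne : Z - c 0 ≠ 0 := by linarith
        have ht' : t * (Z - c 0)⁻¹ = (c 0)⁻¹ := by
          rw [htdef, div_eq_mul_inv, mul_right_comm, mul_inv_cancel₀ hne, one_mul]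
        have h1t' : 1 / (1 + t) = c 0 / Z := by
          rw [h1t, one_div_div]
        have hsplit : (∑ j, Real.exp (-(E j) / (kB * T)) • proj (e j)) =
            c 0 • proj (e 0) + ∑ j ∈ Finset.univ.erase 0, c j • proj (e j) :=
          (Finset.add_sum_erase _ (fun j => c j • proj (e j)) (Finset.mem_univ 0)).symm
        rw [ht', h1t', hsplit, smul_add, smul_add, smul_smul, smul_smul]
        have e1 : c 0 / Z = Z⁻¹ * c 0 := by ring
        have e2 : Z⁻¹ * c 0 * (c 0)⁻¹ = Z⁻¹ := by
          rw [mul_assoc, mul_inv_cancel₀ (hcpos 0).ne', mul_one]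
        rw [e1, e2]
      rw [key]; exact hρS
  -- conclude
  have hbdd : BddBelow {t : ℝ | 0 ≤ t ∧ ∃ τ : Matrix n n ℂ, IsDensity τ ∧
      (1 / (1 + t)) • (proj (e 0) + t • τ) ∈ S} := ⟨0, fun x hx => hx.1⟩
  have hRle : R ≤ t := csInf_le hbdd hmem
  have hR0 : 0 ≤ R := le_csInf ⟨t, hmem⟩ (fun x hx => hx.1)
  have h1 : 1 / (1 + t) ≤ 1 / (1 + R) :=
    one_div_le_one_div_of_le (by linarith) (by linarith)
  have h2 : 1 / (1 + t) = c 0 / Z := by rw [h1t, one_div_div]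
  rw [h2] at h1
  exact absurd hcond (not_lt.mpr h1)
end

section
/- For the Hamiltonian H = E_0|e_0⟩⟨e_0| + Σ_{m=1}^{D−1}(E_0 + Δ)|e_m⟩⟨e_m| (all excited states degenerate at gap Δ > 0), the entanglement criterion p_0 > 2^{−E_R} is equivalent to T < (Δ/k_B) · 1/ln((D−1)/(2^{E_R} − 1)), provided 1 < 2^{E_R} < D. -/
/-!
The ground-state population is `p₀ = 1 / (1 + (D - 1) x)` with Boltzmann factor
`x = exp (-Δ / (k_B T))`, so `p₀ > 2^{-E_R}` says `x < (2^{E_R} - 1) / (D - 1)`. Since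
`1 < 2^{E_R} < D` this threshold lies in `(0, 1)`, and taking logarithms turns the bound on `x`
into the stated upper bound on `T`.
-/

open Real

lemma inv_lt_inv_one_add_mul_iff {c n x : ℝ} (hc : 0 < c) (hn : 0 < n) (hx : 0 ≤ x) :
    c⁻¹ < (1 + n * x)⁻¹ ↔ x < (c - 1) / n := by
  rw [inv_lt_inv₀ hc (by positivity), lt_div_iff₀ hn]
  constructor <;> intro h <;> linarith

lemma exp_neg_div_lt_inv_iff {Δ k T q : ℝ} (hk : 0 < k) (hT : 0 < T) (hq : 1 < q) :
    exp (-Δ / (k * T)) < q⁻¹ ↔ T < Δ / k * (1 / log q) := by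
  have hlog : 0 < log q := log_pos hq
  rw [← lt_log_iff_exp_lt (by positivity), log_inv, neg_div, neg_lt_neg_iff,
    lt_div_iff₀ (by positivity), div_mul_div_comm, mul_one, lt_div_iff₀ (by positivity)]
  constructor <;> intro h <;> linarith

theorem stmt_12_general (D : ℕ) (T kB Δ E0 ER : ℝ)
    (hT : 0 < T) (hkB : 0 < kB)
    (h1 : 1 < (2 : ℝ) ^ ER) (h2 : (2 : ℝ) ^ ER < D)
    (Z0 p0 : ℝ)
    (hZ0 : Z0 = Real.exp (-E0 / (kB * T)) * (1 + (D - 1) * Real.exp (-Δ / (kB * T))))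
    (hp0 : p0 = Real.exp (-E0 / (kB * T)) / Z0) :
    p0 > (2 : ℝ) ^ (-ER) ↔
      T < (Δ / kB) * (1 / Real.log ((D - 1) / ((2 : ℝ) ^ ER - 1))) := by
  have hp0_eq : p0 = (1 + (D - 1) * exp (-Δ / (kB * T)))⁻¹ := by
    rw [hp0, hZ0, div_mul_eq_div_div, div_self (exp_pos _).ne', one_div]
  have hratio : 1 < ((D : ℝ) - 1) / ((2 : ℝ) ^ ER - 1) :=
    (one_lt_div (by linarith)).mpr (by linarith)
  rw [hp0_eq, rpow_neg zero_le_two, gt_iff_lt,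
    inv_lt_inv_one_add_mul_iff (by linarith) (by linarith) (exp_pos _).le, ← inv_div ((D : ℝ) - 1),
    exp_neg_div_lt_inv_iff hkB hT hratio]

/-- For the fully degenerate excited spectrum at gap `Δ`, the criterion
`p₀ > 2^{−E_R}` is equivalent to `T < (Δ/k_B)/ln((D−1)/(2^{E_R}−1))`,
provided `1 < 2^{E_R} < D`. -/
theorem stmt_12 (D : ℕ) (hD : 2 ≤ D) (T kB Δ E0 ER : ℝ)
    (hT : 0 < T) (hkB : 0 < kB) (hΔ : 0 < Δ)
    (h1 : 1 < (2 : ℝ) ^ ER) (h2 : (2 : ℝ) ^ ER < D)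
    (Z0 p0 : ℝ)
    (hZ0 : Z0 = Real.exp (-E0 / (kB * T)) * (1 + (D - 1) * Real.exp (-Δ / (kB * T))))
    (hp0 : p0 = Real.exp (-E0 / (kB * T)) / Z0) :
    p0 > (2 : ℝ) ^ (-ER) ↔
      T < (Δ / kB) * (1 / Real.log ((D - 1) / ((2 : ℝ) ^ ER - 1))) :=
  stmt_12_general D T kB Δ E0 ER hT hkB h1 h2 Z0 p0 hZ0 hp0
end
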